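/- If a family of Hamilton paths in K_5 of size M exists such that the union of any two contains a triangle and any two unions contain an odd cycle (such a family of size 10 exists), then for every n there exists a family of at least 10^{⌊n/5⌋} Hamilton paths in K_n such that the union of any two distinct members contains a triangle. -/
import Mathlib


/-- The edge set of the Hamilton path of `K_n` visiting the vertices in the order
`τ 0, τ 1, …, τ (n-1)`. -/
def pathEdges (n : ℕ) (τ : Equiv.Perm (Fin n)) : Set (Sym2 (Fin n)) :=
  {e | ∃ i : ℕ, ∃ h : i + 1 < n, e = s(τ ⟨i, by omega⟩, τ ⟨i + 1, h⟩)}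

/-- The union of the Hamilton paths `τ` and `φ` contains a triangle. -/
def TriangleInUnion (n : ℕ) (τ φ : Equiv.Perm (Fin n)) : Prop :=
  ∃ a b c : Fin n, a ≠ b ∧ a ≠ c ∧ b ≠ c ∧
    s(a, b) ∈ pathEdges n τ ∪ pathEdges n φ ∧
    s(b, c) ∈ pathEdges n τ ∪ pathEdges n φ ∧
    s(c, a) ∈ pathEdges n τ ∪ pathEdges n φ

/-- The union of the Hamilton paths `τ` and `φ`, as a simple graph on `Fin n`. -/
def unionGraph (n : ℕ) (τ φ : Equiv.Perm (Fin n)) : SimpleGraph (Fin n) :=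
  SimpleGraph.fromRel fun u v => s(u, v) ∈ pathEdges n τ ∪ pathEdges n φ

/-- The union of the Hamilton paths `τ` and `φ` contains an odd cycle. -/
def OddCycleInUnion (n : ℕ) (τ φ : Equiv.Perm (Fin n)) : Prop :=
  ∃ (v : Fin n) (w : (unionGraph n τ φ).Walk v v), w.IsCycle ∧ Odd w.length

/-- The concatenated path function. -/
def blockFun (n : ℕ) (f : Fin (n / 5) → Equiv.Perm (Fin 5)) (x : Fin n) : Fin n :=
  if h : x.val / 5 < n / 5 then
    ⟨5 * (x.val / 5) + ((f ⟨x.val / 5, h⟩) ⟨x.val % 5, Nat.mod_lt _ (by norm_num)⟩).val, by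
      have h2 := ((f ⟨x.val / 5, h⟩) ⟨x.val % 5, Nat.mod_lt _ (by norm_num)⟩).isLt
      omega⟩
  else x

lemma blockFun_spec (n : ℕ) (f : Fin (n / 5) → Equiv.Perm (Fin 5)) (x : Fin n)
    (h : x.val / 5 < n / 5) :
    (blockFun n f x).val
      = 5 * (x.val / 5) + ((f ⟨x.val / 5, h⟩) ⟨x.val % 5, Nat.mod_lt _ (by norm_num)⟩).val := by
  rw [blockFun, dif_pos h]

lemma blockFun_spec' (n : ℕ) (f : Fin (n / 5) → Equiv.Perm (Fin 5)) (x : Fin n)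
    (h : ¬ x.val / 5 < n / 5) : blockFun n f x = x := by
  rw [blockFun, dif_neg h]

lemma blockFun_injective (n : ℕ) (f : Fin (n / 5) → Equiv.Perm (Fin 5)) :
    Function.Injective (blockFun n f) := by
  intro x y hxy
  by_cases hx : x.val / 5 < n / 5 <;> by_cases hy : y.val / 5 < n / 5
  · have h1 := blockFun_spec n f x hx
    have h2 := blockFun_spec n f y hy
    rw [hxy] at h1
    set v1 := ((f ⟨x.val / 5, hx⟩) ⟨x.val % 5, Nat.mod_lt _ (by norm_num)⟩) with hv1
    set v2 := ((f ⟨y.val / 5, hy⟩) ⟨y.val % 5, Nat.mod_lt _ (by norm_num)⟩) with hv2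
    have hl1 := v1.isLt
    have hl2 := v2.isLt
    have hj : x.val / 5 = y.val / 5 := by omega
    have hv : v1 = v2 := Fin.ext (by omega)
    have hfin : (⟨x.val / 5, hx⟩ : Fin (n/5)) = ⟨y.val / 5, hy⟩ := Fin.ext hj
    rw [hv1, hv2, hfin] at hv
    have := (f ⟨y.val / 5, hy⟩).injective hv
    have hm : x.val % 5 = y.val % 5 := by
      simpa [Fin.ext_iff] using this
    exact Fin.ext (by omega)
  · have h1 := blockFun_spec n f x hx
    have h2 := blockFun_spec' n f y hy
    rw [hxy, h2] at h1
    have hl1 := ((f ⟨x.val / 5, hx⟩) ⟨x.val % 5, Nat.mod_lt _ (by norm_num)⟩).isLt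
    omega
  · have h1 := blockFun_spec n f y hy
    have h2 := blockFun_spec' n f x hx
    rw [← hxy, h2] at h1
    have hl1 := ((f ⟨y.val / 5, hy⟩) ⟨y.val % 5, Nat.mod_lt _ (by norm_num)⟩).isLt
    omega
  · rw [blockFun_spec' n f x hx, blockFun_spec' n f y hy] at hxy
    exact hxy

/-- The concatenated path as a permutation. -/
noncomputable def blockPerm (n : ℕ) (f : Fin (n / 5) → Equiv.Perm (Fin 5)) : Equiv.Perm (Fin n) :=
  Equiv.ofBijective (blockFun n f)
    ((Finite.injective_iff_bijective).mp (blockFun_injective n f))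

/-- Embedding of block `j` into `Fin n`. -/
def emb (n : ℕ) (j : Fin (n / 5)) (w : Fin 5) : Fin n :=
  ⟨5 * j.val + w.val, by have := j.isLt; have := w.isLt; omega⟩

lemma blockPerm_emb (n : ℕ) (f : Fin (n / 5) → Equiv.Perm (Fin 5)) (j : Fin (n / 5))
    (r : Fin 5) : blockPerm n f (emb n j r) = emb n j ((f j) r) := by
  have hj := j.isLt
  have hr := r.isLt
  have h : (emb n j r).val / 5 < n / 5 := by
    simp only [emb]; omega
  apply Fin.ext
  rw [show (blockPerm n f (emb n j r)) = blockFun n f (emb n j r) from rfl,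
    blockFun_spec n f _ h]
  have h1 : (5 * j.val + r.val) / 5 = j.val := by omega
  have h2 : (5 * j.val + r.val) % 5 = r.val := by omega
  simp only [emb, h1, h2, Fin.eta]

lemma lift_edge (n : ℕ) (f : Fin (n / 5) → Equiv.Perm (Fin 5)) (j : Fin (n / 5))
    {u v : Fin 5} (h : s(u, v) ∈ pathEdges 5 (f j)) :
    s(emb n j u, emb n j v) ∈ pathEdges n (blockPerm n f) := by
  obtain ⟨i, hi, he⟩ := h
  have hj := j.isLt
  refine ⟨5 * j.val + i, by omega, ?_⟩
  have e1 : (⟨5 * j.val + i, by omega⟩ : Fin n) = emb n j ⟨i, by omega⟩ := rfl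
  have e2 : (⟨5 * j.val + i + 1, by omega⟩ : Fin n) = emb n j ⟨i + 1, hi⟩ := by
    apply Fin.ext; simp [emb]; ring
  rw [e1, e2, blockPerm_emb, blockPerm_emb]
  rw [Sym2.eq_iff] at he ⊢
  rcases he with ⟨ha, hb⟩ | ⟨ha, hb⟩
  · left; rw [ha, hb]; exact ⟨rfl, rfl⟩
  · right; rw [ha, hb]; exact ⟨rfl, rfl⟩

lemma emb_injective (n : ℕ) (j : Fin (n / 5)) : Function.Injective (emb n j) := by
  intro a b hab
  have := congrArg Fin.val hab
  simp only [emb] at this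
  exact Fin.ext (by omega)

lemma blockPerm_injective (n : ℕ) : Function.Injective (blockPerm n) := by
  intro f g h
  funext j
  apply Equiv.ext
  intro r
  have hx : blockPerm n f (emb n j r) = blockPerm n g (emb n j r) := by rw [h]
  rw [blockPerm_emb, blockPerm_emb] at hx
  exact emb_injective n j hx


/-- If there is a family of 10 Hamilton paths in `K_5` such that the union of any two
distinct members contains a triangle (and, in particular, an odd cycle), then for every
`n` there is a family of at least `10^⌊n/5⌋` Hamilton paths in `K_n` such that the union
of any two distinct members contains a triangle. -/
theorem product_construction_triangles
    (h5 : ∃ F : Finset (Equiv.Perm (Fin 5)), F.card = 10 ∧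
      ∀ τ ∈ F, ∀ φ ∈ F, τ ≠ φ → TriangleInUnion 5 τ φ ∧ OddCycleInUnion 5 τ φ) :
    ∀ n : ℕ, ∃ F : Finset (Equiv.Perm (Fin n)),
      10 ^ (n / 5) ≤ F.card ∧
      ∀ τ ∈ F, ∀ φ ∈ F, τ ≠ φ → TriangleInUnion n τ φ := by
  obtain ⟨F5, hcard, hprop⟩ := h5
  intro n
  refine ⟨(Fintype.piFinset fun _ : Fin (n / 5) => F5).image (blockPerm n), ?_, ?_⟩
  · rw [Finset.card_image_of_injective _ (blockPerm_injective n),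
      Fintype.card_piFinset]
    simp [hcard]
  · intro τ hτ φ hφ hne
    simp only [Finset.mem_image] at hτ hφ
    obtain ⟨f, hf, rfl⟩ := hτ
    obtain ⟨g, hg, rfl⟩ := hφ
    have hfg : f ≠ g := fun h => hne (by rw [h])
    obtain ⟨j, hj⟩ := Function.ne_iff.mp hfg
    rw [Fintype.mem_piFinset] at hf hg
    obtain ⟨⟨a, b, c, hab, hac, hbc, e1, e2, e3⟩, -⟩ :=
      hprop (f j) (hf j) (g j) (hg j) hj
    refine ⟨emb n j a, emb n j b, emb n j c,
      fun h => hab (emb_injective n j h),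
      fun h => hac (emb_injective n j h),
      fun h => hbc (emb_injective n j h), ?_, ?_, ?_⟩
    · rcases e1 with h | h
      · exact Or.inl (lift_edge n f j h)
      · exact Or.inr (lift_edge n g j h)
    · rcases e2 with h | h
      · exact Or.inl (lift_edge n f j h)
      · exact Or.inr (lift_edge n g j h)
    · rcases e3 with h | h
      · exact Or.inl (lift_edge n f j h)
      · exact Or.inr (lift_edge n g j h)
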